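/- With Ξ the 4×4 matrix [[−vt, y, z, t], [−uy−2vz, vt, −ut, z], [−wz, wt, −vt, −y], [−uwt, −wz, uy+2vz, vt]] over ℂ[x,y,z,w,u,v,t], one has Ξ² = −(uy² + 2vyz + wz² + (uw−v²)t²)·I₄; equivalently the characteristic behavior Ξ² + (f − x²)·I = 0 where f = x² + uy² + 2vyz + wz² + (uw−v²)t². -/

import Mathlib

open MvPolynomial

noncomputable section

abbrev S6 : Type := MvPolynomial (Fin 7) ℂ

def x6 : S6 := X 0
def y6 : S6 := X 1
def z6 : S6 := X 2
def w6 : S6 := X 3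
def u6 : S6 := X 4
def v6 : S6 := X 5
def t6 : S6 := X 6

def Xi6 : Matrix (Fin 4) (Fin 4) S6 :=
  !![-v6*t6, y6, z6, t6;
     -u6*y6 - 2*v6*z6, v6*t6, -u6*t6, z6;
     -w6*z6, w6*t6, -v6*t6, -y6;
     -u6*w6*t6, -w6*z6, u6*y6 + 2*v6*z6, v6*t6]

def f6 : S6 := x6^2 + u6*y6^2 + 2*v6*y6*z6 + w6*z6^2 + (u6*w6 - v6^2)*t6^2

section XiMatrix

variable {R : Type*} [CommRing R]

def xiMatrix (y z w u v t : R) : Matrix (Fin 4) (Fin 4) R :=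
  !![-v*t, y, z, t;
     -u*y - 2*v*z, v*t, -u*t, z;
     -w*z, w*t, -v*t, -y;
     -u*w*t, -w*z, u*y + 2*v*z, v*t]

theorem xiMatrix_mul_self (y z w u v t : R) :
    xiMatrix y z w u v t * xiMatrix y z w u v t =
      (-(u*y^2 + 2*v*y*z + w*z^2 + (u*w - v^2)*t^2)) • (1 : Matrix (Fin 4) (Fin 4) R) := by
  ext i j
  fin_cases i <;> fin_cases j <;>
    simp [xiMatrix, Matrix.mul_apply, Fin.sum_univ_four] <;> ring

end XiMatrix

theorem Xi6_eq_xiMatrix : Xi6 = xiMatrix y6 z6 w6 u6 v6 t6 := rfl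

theorem f6_sub_x6_sq : f6 - x6^2 = u6*y6^2 + 2*v6*y6*z6 + w6*z6^2 + (u6*w6 - v6^2)*t6^2 := by
  rw [f6]; ring

theorem Xi_squared :
    Xi6 * Xi6 =
      (-(u6*y6^2 + 2*v6*y6*z6 + w6*z6^2 + (u6*w6 - v6^2)*t6^2)) •
        (1 : Matrix (Fin 4) (Fin 4) S6) ∧
    Xi6 * Xi6 + (f6 - x6^2) • (1 : Matrix (Fin 4) (Fin 4) S6) = 0 := by
  have hsq := Xi6_eq_xiMatrix ▸ xiMatrix_mul_self y6 z6 w6 u6 v6 t6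
  refine ⟨hsq, ?_⟩
  rw [hsq, f6_sub_x6_sq, ← add_smul, neg_add_cancel, zero_smul]

end
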